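/- Let X be a real Banach lattice containing nonzero elements f₁, f₂ with f₁ ⊥ f₂. Then there exists a continuous linear operator Q : X → X with Q ∘ Q = Q that is semi containment preserving but not semi band preserving. -/

import Mathlib

/-!
Take a continuous functional `φ` with `φ f₁ = 1` and `φ f₂ ≠ 0`, and the rank-one projection
`Q f = φ f • f₁`. Since nonzero multiples of an element generate the same band, every nonzero
value of `Q` generates the band of `f₁`, so `Q` is semi containment preserving. On the other hand
`f₂ ⊥ Q f₁ = f₁`, while `Q f₂ = φ f₂ • f₁` is not disjoint from `f₁`.
-/

section Band

variable {X : Type*} [Lattice X] [AddGroup X]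

/-- `f ◁ g`: `f` lies in the band generated by `g`. -/
def InBand (f g : X) : Prop := ∀ h : X, |h| ⊓ |g| = 0 → |h| ⊓ |f| = 0

def IsSemiBandPreserving (Q : X → X) : Prop :=
  ∀ f g : X, |f| ⊓ |Q g| = 0 → |Q f| ⊓ |Q g| = 0

def IsSemiContainmentPreserving (Q : X → X) : Prop :=
  ∀ f g : X, InBand f (Q g) → InBand (Q f) (Q g)

theorem InBand.trans {f g k : X} (hfg : InBand f g) (hgk : InBand g k) : InBand f k :=
  fun h hk => hfg h (hgk h hk)

variable [AddLeftMono X]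

theorem eq_zero_of_abs_eq_zero {f : X} (hf : |f| = 0) : f = 0 :=
  le_antisymm ((le_abs_self f).trans hf.le) (neg_nonpos.mp ((neg_le_abs f).trans hf.le))

variable [AddRightMono X]

theorem eq_zero_of_inBand_zero {f : X} (hf : InBand f 0) : f = 0 :=
  eq_zero_of_abs_eq_zero <| by
    simpa only [inf_idem] using hf f (by rw [abs_zero, inf_eq_right]; exact abs_nonneg f)

end Band

section Scaling

variable {𝕜 X : Type*} [Field 𝕜] [LinearOrder 𝕜] [IsStrictOrderedRing 𝕜]
  [AddCommGroup X] [Lattice X] [IsOrderedAddMonoid X] [Module 𝕜 X] [PosSMulMono 𝕜 X]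

theorem abs_smul_eq_abs_smul_abs (c : 𝕜) (x : X) : |c • x| = |c| • |x| := by
  have abs_smul_of_pos : ∀ c : 𝕜, 0 < c → ∀ x : X, |c • x| = c • |x| := fun c hc x => by
    rw [abs, abs, ← smul_neg]
    exact ((OrderIso.smulRight hc).map_sup x (-x)).symm
  rcases lt_trichotomy c 0 with hc | rfl | hc
  · rw [← abs_neg, ← neg_smul, abs_smul_of_pos _ (neg_pos.mpr hc), abs_of_neg hc]
  · simp
  · rw [abs_smul_of_pos c hc, abs_of_pos hc]

theorem inf_smul_eq_zero {a b : X} (ha : 0 ≤ a) (hb : 0 ≤ b) (hab : a ⊓ b = 0)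
    {c : 𝕜} (hc : 0 ≤ c) : a ⊓ c • b = 0 := by
  have hc1 : (0 : 𝕜) < c + 1 := by linarith
  refine le_antisymm ?_ (le_inf ha (smul_nonneg hc hb))
  calc a ⊓ c • b ≤ (c + 1) • a ⊓ (c + 1) • b :=
        inf_le_inf (le_smul_of_one_le_left ha (by linarith))
          (smul_le_smul_of_nonneg_right (by linarith) hb)
    _ = (c + 1) • (a ⊓ b) := ((OrderIso.smulRight hc1).map_inf a b).symm
    _ = 0 := by rw [hab, smul_zero]

theorem abs_inf_abs_smul_eq_zero {h x : X} (hx : |h| ⊓ |x| = 0) (c : 𝕜) :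
    |h| ⊓ |c • x| = 0 := by
  rw [abs_smul_eq_abs_smul_abs]
  exact inf_smul_eq_zero (abs_nonneg h) (abs_nonneg x) hx (abs_nonneg c)

theorem abs_inf_abs_smul_eq_zero_iff {c : 𝕜} (hc : c ≠ 0) {h x : X} :
    |h| ⊓ |c • x| = 0 ↔ |h| ⊓ |x| = 0 := by
  refine ⟨fun hcx => ?_, fun hx => abs_inf_abs_smul_eq_zero hx c⟩
  simpa [smul_smul, inv_mul_cancel₀ hc] using abs_inf_abs_smul_eq_zero hcx c⁻¹

theorem inBand_smul_self (c : 𝕜) (x : X) : InBand (c • x) x :=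
  fun _ hx => abs_inf_abs_smul_eq_zero hx c

theorem inBand_of_smul {c : 𝕜} (hc : c ≠ 0) (x : X) : InBand x (c • x) :=
  fun _ hcx => (abs_inf_abs_smul_eq_zero_iff hc).mp hcx

end Scaling

section RankOne

variable {𝕜 X : Type*} [Field 𝕜] [LinearOrder 𝕜] [IsStrictOrderedRing 𝕜] [TopologicalSpace 𝕜]
  [AddCommGroup X] [Lattice X] [IsOrderedAddMonoid X] [Module 𝕜 X] [PosSMulMono 𝕜 X]
  [TopologicalSpace X] [ContinuousSMul 𝕜 X]

theorem isSemiContainmentPreserving_smulRight (φ : X →L[𝕜] 𝕜) (e : X) :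
    IsSemiContainmentPreserving (φ.smulRight e) := by
  intro f g hfg
  simp only [ContinuousLinearMap.smulRight_apply] at hfg ⊢
  rcases eq_or_ne (φ g) 0 with hg | hg
  · have hf : f = 0 := eq_zero_of_inBand_zero (by rwa [hg, zero_smul] at hfg)
    simp only [hf, hg, map_zero, zero_smul]
    exact fun _ => id
  · exact (inBand_smul_self (φ f) e).trans (inBand_of_smul hg e)

theorem not_isSemiBandPreserving_smulRight {φ : X →L[𝕜] 𝕜} {e f : X} (he : e ≠ 0)
    (hφe : φ e ≠ 0) (hφf : φ f ≠ 0) (hdisj : |f| ⊓ |e| = 0) :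
    ¬ IsSemiBandPreserving (φ.smulRight e) := by
  intro hQ
  have hfe : |φ f • e| ⊓ |φ e • e| = 0 :=
    hQ f e (abs_inf_abs_smul_eq_zero hdisj (φ e))
  rw [abs_inf_abs_smul_eq_zero_iff hφe, inf_comm, abs_inf_abs_smul_eq_zero_iff hφf,
    inf_idem] at hfe
  exact he (eq_zero_of_abs_eq_zero hfe)

end RankOne

theorem exists_scp_proj_not_sbp_general
    {X : Type*} [NormedAddCommGroup X] [Lattice X]
    [IsOrderedAddMonoid X] [NormedSpace ℝ X]
    [PosSMulStrictMono ℝ X]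
    (f₁ f₂ : X) (hf₁ : f₁ ≠ 0) (hf₂ : f₂ ≠ 0) (hdisj : |f₁| ⊓ |f₂| = 0) :
    ∃ Q : X →L[ℝ] X,
      (∀ f : X, Q (Q f) = Q f) ∧
      (∀ f g : X, (∀ h : X, |h| ⊓ |Q g| = 0 → |h| ⊓ |f| = 0) →
        (∀ h : X, |h| ⊓ |Q g| = 0 → |h| ⊓ |Q f| = 0)) ∧
      ¬ (∀ f g : X, |f| ⊓ |Q g| = 0 → |Q f| ⊓ |Q g| = 0) := by
  obtain ⟨φ, hφ₁, hφ₂⟩ := SeparatingDual.exists_eq_one_ne_zero_of_ne_zero_pair (R := ℝ) hf₁ hf₂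
  refine ⟨φ.smulRight f₁, fun f => ?_, isSemiContainmentPreserving_smulRight φ f₁,
    not_isSemiBandPreserving_smulRight hf₁ (hφ₁ ▸ one_ne_zero) hφ₂
      (by rwa [inf_comm])⟩
  simp [hφ₁]

/-- On any real Banach lattice containing two nonzero disjoint elements there
is a continuous linear projection which is semi containment preserving but not semi band
preserving. -/
theorem exists_scp_proj_not_sbp
    {X : Type*} [NormedAddCommGroup X] [Lattice X] [HasSolidNorm X]
    [IsOrderedAddMonoid X] [NormedSpace ℝ X]
    [CompleteSpace X] [PosSMulStrictMono ℝ X] [PosSMulReflectLT ℝ X]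
    (f₁ f₂ : X) (hf₁ : f₁ ≠ 0) (hf₂ : f₂ ≠ 0) (hdisj : |f₁| ⊓ |f₂| = 0) :
    ∃ Q : X →L[ℝ] X,
      (∀ f : X, Q (Q f) = Q f) ∧
      (∀ f g : X, (∀ h : X, |h| ⊓ |Q g| = 0 → |h| ⊓ |f| = 0) →
        (∀ h : X, |h| ⊓ |Q g| = 0 → |h| ⊓ |Q f| = 0)) ∧
      ¬ (∀ f g : X, |f| ⊓ |Q g| = 0 → |Q f| ⊓ |Q g| = 0) :=
  exists_scp_proj_not_sbp_general f₁ f₂ hf₁ hf₂ hdisj
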